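/- arXiv:2305.02267 — 7 statements merged into one kernel-verified Lean document; each statement's English description precedes it below -/
import Mathlib

section
/- Let m be a positive integer, ζ a primitive m-th root of unity in ℂ, and define the cyclic quantum dilogarithm D_ζ(x) = ∏_{t=1}^{m-1} (1 - ζ^t x)^t. Then for all x ∈ ℂ with x^m ≠ 1, D_ζ(ζx)/D_ζ(x) = (1-x)^m/(1-x^m). -/
open Finset

/-- Cyclic quantum dilogarithm: `D_ζ(x) = ∏_{t=1}^{m-1} (1 - ζ^t x)^t`. -/
noncomputable def cyclicDilog (m : ℕ) (ζ x : ℂ) : ℂ :=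
  ∏ t ∈ Finset.Icc 1 (m - 1), (1 - ζ ^ t * x) ^ t

/-! Writing `g t = 1 - ζ^t x`, we have `D_ζ(x) = ∏_{t<m} g_t^t` and `D_ζ(ζx) = ∏_{t<m} g_{t+1}^t`.
Multiplying the latter by `∏_{t<m} g_{t+1}` raises every exponent by one, which telescopes to
`D_ζ(x) · g_m^m = D_ζ(x) (1 - x)^m`. Since `g` has period `m`, the extra factor is
`∏_{t<m} g_t = 1 - x^m`, the factorisation of `1 - x^m` over the `m`-th roots of unity. -/

section CommMonoid

variable {M : Type*} [CommMonoid M]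

theorem prod_range_rotate {f : ℕ → M} {m : ℕ} (h : f m = f 0) :
    ∏ t ∈ range m, f (t + 1) = ∏ t ∈ range m, f t := by
  rcases m with _ | n
  · simp
  · rw [prod_range_succ, h, prod_range_succ']

theorem prod_range_succ_pow_mul_prod_range_succ (f : ℕ → M) (m : ℕ) :
    (∏ t ∈ range m, f (t + 1) ^ t) * ∏ t ∈ range m, f (t + 1) =
      (∏ t ∈ range m, f t ^ t) * f m ^ m := by
  rw [← prod_mul_distrib, ← prod_range_succ]
  simp_rw [← pow_succ]
  rw [prod_range_succ' (fun t => f t ^ t), pow_zero, mul_one]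

end CommMonoid

section CommRing

variable {R : Type*} [CommRing R]

theorem one_sub_pow_mul_ne_zero {ζ x : R} {m : ℕ} (hζ : ζ ^ m = 1) (hx : x ^ m ≠ 1) (t : ℕ) :
    1 - ζ ^ t * x ≠ 0 := by
  intro h
  apply hx
  calc x ^ m = (ζ ^ m) ^ t * x ^ m := by rw [hζ, one_pow, one_mul]
    _ = (ζ ^ t * x) ^ m := by ring
    _ = 1 := by rw [← sub_eq_zero.mp h, one_pow]

theorem IsPrimitiveRoot.prod_one_sub_pow_mul [IsDomain R] {ζ : R} {m : ℕ}
    (hζ : IsPrimitiveRoot ζ m) (hm : 0 < m) (x : R) :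
    ∏ t ∈ range m, (1 - ζ ^ t * x) = 1 - x ^ m := by
  simpa [Polynomial.eval_prod] using
    (congrArg (Polynomial.eval 1) (X_pow_sub_C_eq_prod hζ hm (rfl : x ^ m = x ^ m))).symm

end CommRing

theorem cyclicDilog_eq_prod_range (m : ℕ) (ζ x : ℂ) :
    cyclicDilog m ζ x = ∏ t ∈ range m, (1 - ζ ^ t * x) ^ t := by
  rcases m with _ | n
  · simp [cyclicDilog]
  · rw [cyclicDilog, Nat.add_sub_cancel, ← Ico_add_one_right_eq_Icc, range_eq_Ico,
      prod_eq_prod_Ico_succ_bot n.add_one_pos, pow_zero, one_mul, zero_add]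

theorem cyclicDilog_mul_eq_prod_range (m : ℕ) (ζ x : ℂ) :
    cyclicDilog m ζ (ζ * x) = ∏ t ∈ range m, (1 - ζ ^ (t + 1) * x) ^ t := by
  simp only [cyclicDilog_eq_prod_range, pow_succ, mul_assoc]

theorem cyclicDilog_ne_zero {m : ℕ} {ζ x : ℂ} (hζ : ζ ^ m = 1) (hx : x ^ m ≠ 1) :
    cyclicDilog m ζ x ≠ 0 := by
  rw [cyclicDilog_eq_prod_range]
  exact prod_ne_zero_iff.mpr fun t _ => pow_ne_zero _ (one_sub_pow_mul_ne_zero hζ hx t)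

theorem cyclicDilog_mul_mul_one_sub_pow {m : ℕ} {ζ : ℂ} (hζ : IsPrimitiveRoot ζ m) (hm : 0 < m)
    (x : ℂ) : cyclicDilog m ζ (ζ * x) * (1 - x ^ m) = cyclicDilog m ζ x * (1 - x) ^ m := by
  have hperiodic : 1 - ζ ^ m * x = 1 - ζ ^ 0 * x := by rw [hζ.pow_eq_one, pow_zero]
  have htelescope := prod_range_succ_pow_mul_prod_range_succ (fun t => 1 - ζ ^ t * x) m
  rw [prod_range_rotate (f := fun t => 1 - ζ ^ t * x) hperiodic, hζ.prod_one_sub_pow_mul hm,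
    hζ.pow_eq_one, one_mul] at htelescope
  rw [cyclicDilog_mul_eq_prod_range, cyclicDilog_eq_prod_range]
  exact htelescope

theorem cyclicDilog_shift_general (m : ℕ) (ζ : ℂ)
    (hζ : IsPrimitiveRoot ζ m) (x : ℂ) (hx : x ^ m ≠ 1) :
    cyclicDilog m ζ (ζ * x) / cyclicDilog m ζ x = (1 - x) ^ m / (1 - x ^ m) := by
  have hm : 0 < m := Nat.pos_of_ne_zero (by rintro rfl; exact hx (pow_zero x))
  rw [div_eq_div_iff (cyclicDilog_ne_zero hζ.pow_eq_one hx) (sub_ne_zero.mpr hx.symm)]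
  linear_combination cyclicDilog_mul_mul_one_sub_pow hζ hm x

theorem cyclicDilog_shift (m : ℕ) (hm : 0 < m) (ζ : ℂ)
    (hζ : IsPrimitiveRoot ζ m) (x : ℂ) (hx : x ^ m ≠ 1) :
    cyclicDilog m ζ (ζ * x) / cyclicDilog m ζ x = (1 - x) ^ m / (1 - x ^ m) :=
  cyclicDilog_shift_general m ζ hζ x hx
end

section
/- Let m, p, q be positive integers with p, q coprime to m and pq ≡ 1 (mod m). For each residue r with 1 ≤ r ≤ m-1, the sets M(r) = {t ∈ [1, p-1] : ⌊mt/p⌋ + 1 = r} and M'(r) = {t ∈ [1, p-1] : tq ≡ r (mod m)} have the same cardinality. -/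
open Finset

/-!
The map `t ↦ r p - m t` is the bijection. The floor condition `⌊m t / p⌋ = r - 1` says
`0 < r p - m t ≤ p`, and the upper bound is strict because `m ∤ (r - 1) p` for `0 < r - 1 < m`
(when `r = 1` it is strict because `t ≥ 1`). On the other side, as `p q ≡ 1`, the condition
`u q ≡ r (mod m)` says `u ≡ r p (mod m)`, i.e. `u = r p - m t` for some `t`.
-/

theorem Nat.div_add_one_eq_iff {n p r : ℕ} (hp : 0 < p) :
    n / p + 1 = r ↔ n < r * p ∧ r * p ≤ n + p := by
  cases r with
  | zero => simp
  | succ s => rw [add_left_inj, Nat.div_eq_iff hp, add_one_mul]; omega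

theorem Nat.mul_ne_mul_of_coprime {m p s t : ℕ} (hpm : p.Coprime m) (hs : s < m) (ht : t ≠ 0) :
    s * p ≠ m * t := by
  intro h
  obtain rfl : s = 0 := Nat.eq_zero_of_dvd_of_lt (hpm.symm.dvd_of_dvd_mul_right ⟨t, h⟩) hs
  simp only [zero_mul, zero_eq_mul] at h
  omega

theorem Nat.mul_modEq_iff_modEq_mul {m p q u r : ℕ} (hpq : p * q ≡ 1 [MOD m]) :
    u * q ≡ r [MOD m] ↔ u ≡ r * p [MOD m] := by
  constructor
  · intro h
    calc u = u * 1 := (mul_one u).symm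
      _ ≡ u * (p * q) [MOD m] := (hpq.mul_left u).symm
      _ = u * q * p := by ring
      _ ≡ r * p [MOD m] := h.mul_right p
  · intro h
    calc u * q ≡ r * p * q [MOD m] := h.mul_right q
      _ = r * (p * q) := by ring
      _ ≡ r * 1 [MOD m] := hpq.mul_left r
      _ = r := mul_one r

section Fibers

variable {m p q r t : ℕ}

theorem mem_floor_fiber_iff (hp : 0 < p) (hpm : p.Coprime m) (hrm : r < m) :
    t ∈ (Icc 1 (p - 1)).filter (fun t => m * t / p + 1 = r) ↔
      m * t < r * p ∧ r * p < m * t + p := by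
  rw [mem_filter, mem_Icc, Nat.div_add_one_eq_iff hp]
  have hrpmp : r * p < m * p := Nat.mul_lt_mul_of_pos_right hrm hp
  constructor
  · rintro ⟨⟨ht, -⟩, hlt, hle⟩
    refine ⟨hlt, lt_of_le_of_ne hle ?_⟩
    cases r with
    | zero => omega
    | succ s =>
      rw [add_one_mul, ne_eq, add_left_inj]
      exact Nat.mul_ne_mul_of_coprime hpm (by omega) (by omega)
  · rintro ⟨hlt, hgt⟩
    have htp : t < p := Nat.lt_of_mul_lt_mul_left (hlt.trans hrpmp)
    have ht : t ≠ 0 := by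
      rintro rfl
      have : r < 1 := Nat.lt_of_mul_lt_mul_right (a := p) (by simpa using hgt)
      simp_all
    omega

theorem mem_residue_fiber_iff (hpq : p * q ≡ 1 [MOD m]) {u : ℕ} :
    u ∈ (Icc 1 (p - 1)).filter (fun u => u * q ≡ r [MOD m]) ↔
      (0 < u ∧ u < p) ∧ u ≡ r * p [MOD m] := by
  rw [mem_filter, mem_Icc, Nat.mul_modEq_iff_modEq_mul hpq]
  exact and_congr_left' (by omega)

end Fibers

theorem card_floor_eq_card_residue_general (m p q : ℕ) (hm : 0 < m) (hp : 0 < p)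
    (hpm : Nat.Coprime p m)
    (hpq : p * q ≡ 1 [MOD m]) (r : ℕ) (hr1 : 1 ≤ r) (hrm : r ≤ m - 1) :
    ((Finset.Icc 1 (p - 1)).filter (fun t => m * t / p + 1 = r)).card =
    ((Finset.Icc 1 (p - 1)).filter (fun t => t * q ≡ r [MOD m])).card := by
  have hr : r < m := by omega
  refine card_bij (fun t _ => r * p - m * t) ?_ ?_ ?_
  · intro t ht
    obtain ⟨hlt, hgt⟩ := (mem_floor_fiber_iff hp hpm hr).mp ht
    refine (mem_residue_fiber_iff hpq).mpr ⟨⟨by omega, by omega⟩, ?_⟩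
    exact (Nat.modEq_iff_dvd' (Nat.sub_le _ _)).mpr ⟨t, Nat.sub_sub_self hlt.le⟩
  · intro t₁ h₁ t₂ h₂ h
    have h₁ := ((mem_floor_fiber_iff hp hpm hr).mp h₁).1
    have h₂ := ((mem_floor_fiber_iff hp hpm hr).mp h₂).1
    exact Nat.eq_of_mul_eq_mul_left hm (by omega)
  · intro u hu
    obtain ⟨⟨hu0, hup⟩, hmod⟩ := (mem_residue_fiber_iff hpq).mp hu
    have hpr : p ≤ r * p := Nat.le_mul_of_pos_left p hr1
    obtain ⟨t, ht⟩ := (Nat.modEq_iff_dvd' (by omega)).mp hmod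
    exact ⟨t, (mem_floor_fiber_iff hp hpm hr).mpr ⟨by omega, by omega⟩, by omega⟩

theorem card_floor_eq_card_residue (m p q : ℕ) (hm : 0 < m) (hp : 0 < p) (hq : 0 < q)
    (hpm : Nat.Coprime p m) (hqm : Nat.Coprime q m)
    (hpq : p * q ≡ 1 [MOD m]) (r : ℕ) (hr1 : 1 ≤ r) (hrm : r ≤ m - 1) :
    ((Finset.Icc 1 (p - 1)).filter (fun t => m * t / p + 1 = r)).card =
    ((Finset.Icc 1 (p - 1)).filter (fun t => t * q ≡ r [MOD m])).card :=
  card_floor_eq_card_residue_general m p q hm hp hpm hpq r hr1 hrm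
end

section
/- Let m be a positive integer, ζ a primitive m-th root of unity, p, q positive integers coprime to m with pq ≡ 1 (mod m), and x ∈ ℂ with x^m ≠ 1. Then ∏_{t=1}^{m-1}(1 - ζ^{qt}x)^t = ∏_{t=1}^{m-1}(1 - ζ^t x)^{m·(pt/m - ⌊pt/m⌋)}, i.e., D_{ζ^q}(x) = ∏_{t=1}^{m-1}(1-ζ^t x)^{pt - m⌊pt/m⌋}. -/
/-!
Since `ζ ^ m = 1`, the factor `1 - ζ ^ (q t) x` equals `1 - ζ ^ s x` with `s = q t mod m`, and
`t ↦ q t mod m` permutes `{1, …, m - 1}` with inverse `s ↦ p s mod m`; reindexing the left-hand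
product by `s` turns the exponent `t` into `p s mod m`.
-/

open Finset

namespace Nat

theorem mul_mul_mod_mod_eq_of_modEq_one {m p q t : ℕ} (hpq : p * q ≡ 1 [MOD m]) (ht : t < m) :
    p * (q * t % m) % m = t := by
  have h : p * (q * t % m) ≡ t [MOD m] :=
    calc p * (q * t % m) ≡ p * (q * t) [MOD m] := (Nat.mod_modEq _ m).mul_left p
      _ = p * q * t := (mul_assoc p q t).symm
      _ ≡ 1 * t [MOD m] := hpq.mul_right t
      _ = t := one_mul t
  rw [h, Nat.mod_eq_of_lt ht]

theorem mul_mod_mem_Icc_of_modEq_one {m p q t : ℕ} (hpq : p * q ≡ 1 [MOD m])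
    (ht : t ∈ Icc 1 (m - 1)) : q * t % m ∈ Icc 1 (m - 1) := by
  rw [mem_Icc] at ht ⊢
  have hinv := mul_mul_mod_mod_eq_of_modEq_one hpq (t := t) (by omega)
  have hpos : q * t % m ≠ 0 := fun h => by rw [h, mul_zero, Nat.zero_mod] at hinv; omega
  have hlt : q * t % m < m := Nat.mod_lt _ (by omega)
  omega

end Nat

theorem Finset.prod_Icc_mul_mod_eq_of_modEq_one {M : Type*} [CommMonoid M] {m p q : ℕ}
    (hpq : p * q ≡ 1 [MOD m]) (f : ℕ → ℕ → M) :
    ∏ t ∈ Icc 1 (m - 1), f (q * t % m) t = ∏ s ∈ Icc 1 (m - 1), f s (p * s % m) := by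
  have hqp : q * p ≡ 1 [MOD m] := by rwa [mul_comm]
  have hlt {t : ℕ} (ht : t ∈ Icc 1 (m - 1)) : t < m := by rw [mem_Icc] at ht; omega
  refine prod_nbij' (fun t => q * t % m) (fun s => p * s % m)
    (fun _ => Nat.mul_mod_mem_Icc_of_modEq_one hpq) (fun _ => Nat.mul_mod_mem_Icc_of_modEq_one hqp)
    (fun _ ht => Nat.mul_mul_mod_mod_eq_of_modEq_one hpq (hlt ht))
    (fun _ hs => Nat.mul_mul_mod_mod_eq_of_modEq_one hqp (hlt hs)) fun t ht => ?_
  rw [Nat.mul_mul_mod_mod_eq_of_modEq_one hpq (hlt ht)]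

theorem cyclicDilog_pow_q_eq_general (m p q : ℕ) (hpq : p * q ≡ 1 [MOD m])
    (ζ : ℂ) (hζ : IsPrimitiveRoot ζ m) (x : ℂ) :
    ∏ t ∈ Finset.Icc 1 (m - 1), (1 - ζ ^ (q * t) * x) ^ t =
    ∏ t ∈ Finset.Icc 1 (m - 1), (1 - ζ ^ t * x) ^ (p * t - m * (p * t / m)) := by
  simp_rw [← Nat.mod_def]
  conv_lhs => enter [2, t]; rw [pow_eq_pow_mod (q * t) hζ.pow_eq_one]
  exact prod_Icc_mul_mod_eq_of_modEq_one hpq fun s e => (1 - ζ ^ s * x) ^ e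

theorem cyclicDilog_pow_q_eq (m p q : ℕ) (hm : 0 < m) (hp : 0 < p) (hq : 0 < q)
    (hpm : Nat.Coprime p m) (hqm : Nat.Coprime q m) (hpq : p * q ≡ 1 [MOD m])
    (ζ : ℂ) (hζ : IsPrimitiveRoot ζ m) (x : ℂ) (hx : x ^ m ≠ 1) :
    ∏ t ∈ Finset.Icc 1 (m - 1), (1 - ζ ^ (q * t) * x) ^ t =
    ∏ t ∈ Finset.Icc 1 (m - 1), (1 - ζ ^ t * x) ^ (p * t - m * (p * t / m)) :=
  cyclicDilog_pow_q_eq_general m p q hpq ζ hζ x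
end

section
/- Let m be a positive integer, ζ a primitive m-th root of unity, p, q positive integers with pq ≡ 1 (mod m), and e an integer. Then for x ∈ ℂ such that all factors are nonzero, ∏_{t=0}^{p-1} (ζ^{tq} x; ζ)_e appearing in denominators satisfies ∏_{t=0}^{p-1} (ζ^{tq}x; ζ)_e = (x; ζ^q)_{pe}, where (x;ζ)_n = ∏_{i=0}^{n-1}(1-ζ^i x). -/
open Finset

/-- q-Pochhammer symbol `(x;ζ)_n = ∏_{i=0}^{n-1} (1 - ζ^i x)`. -/
noncomputable def qPoch (ζ x : ℂ) (n : ℕ) : ℂ :=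
  ∏ i ∈ Finset.range n, (1 - ζ ^ i * x)

theorem qPoch_succ (ζ x : ℂ) (n : ℕ) : qPoch ζ x (n + 1) = qPoch ζ x n * (1 - ζ ^ n * x) :=
  prod_range_succ _ n

theorem qPoch_mul_add (ζ x : ℂ) (n k : ℕ) :
    qPoch ζ x (n + k) = qPoch ζ x n * ∏ t ∈ range k, (1 - ζ ^ (n + t) * x) :=
  prod_range_add _ n k

/-- The factors of `(x; w)_{pe}` with exponents `≡ t (mod p)` form `(w^t x; w^p)_e`. -/
theorem prod_qPoch_pow_mul (w x : ℂ) (p e : ℕ) :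
    ∏ t ∈ range p, qPoch (w ^ p) (w ^ t * x) e = qPoch w x (p * e) := by
  induction e with
  | zero => simp [qPoch]
  | succ e ih =>
    simp only [qPoch_succ, prod_mul_distrib, ih, mul_add, mul_one, qPoch_mul_add]
    congr 1
    refine prod_congr rfl fun t _ => ?_
    rw [← mul_assoc, ← pow_mul, ← pow_add, mul_comm p e]

theorem prod_qPoch_shift_general (m p q : ℕ)
    (hpq : p * q ≡ 1 [MOD m]) (ζ : ℂ) (hζ : IsPrimitiveRoot ζ m)
    (e : ℕ) (x : ℂ) :
    ∏ t ∈ Finset.range p, qPoch ζ (ζ ^ (t * q) * x) e = qPoch (ζ ^ q) x (p * e) := by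
  have hζqp : (ζ ^ q) ^ p = ζ := by
    rw [← pow_mul, pow_eq_pow_mod _ hζ.pow_eq_one, mul_comm, hpq,
      ← pow_eq_pow_mod _ hζ.pow_eq_one, pow_one]
  simpa only [hζqp, ← pow_mul, mul_comm q] using prod_qPoch_pow_mul (ζ ^ q) x p e

theorem prod_qPoch_shift (m p q : ℕ) (hm : 0 < m) (hp : 0 < p) (hq : 0 < q)
    (hpq : p * q ≡ 1 [MOD m]) (ζ : ℂ) (hζ : IsPrimitiveRoot ζ m)
    (e : ℕ) (x : ℂ) :
    ∏ t ∈ Finset.range p, qPoch ζ (ζ ^ (t * q) * x) e = qPoch (ζ ^ q) x (p * e) :=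
  prod_qPoch_shift_general m p q hpq ζ hζ e x
end

section
/- Let N be a positive integer, A ∈ ℚ^{N×N}, and D = diag(d_1,...,d_N) with positive integers d_i, such that AD is symmetric positive definite. Then there exists a unique solution (z_1,...,z_N) ∈ (0,1)^N of the Nahm equation 1 - z_i = ∏_{j=1}^N z_j^{A_{ij}} for all i. -/
/-!
Put `z_i = exp (-(d_i w_i))` and `B = A D`. Nahm's equation becomes
`(B w)_i + φ_i (w_i) = 0` with `φ_i t = log (1 - exp (-(d_i t)))`, which is continuous, increasing
and tends to `-∞` as `t → 0⁺`. With `G_i' = φ_i`, this is the critical-point equation of the convex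
potential `wᵀ B w / 2 + ∑ G_i (w_i)` on the open orthant.

Uniqueness: if `w ≠ w'` are two solutions, positive definiteness and monotonicity of `φ_i` give
the contradiction `0 < (w - w')ᵀ B (w - w') = -∑ (w_i - w'_i) (φ_i w_i - φ_i w'_i) ≤ 0`.

Existence: `G_i` lies above its tangent lines, so the potential is coercive and attains its minimum
on each box `{w | ∀ i, ε ≤ w i}`, within a ball independent of `ε`. Because `φ_i → -∞` at `0`,
for small `ε` the inward derivative of the potential is negative at every point of that ball on a
face `w_i = ε`, so the minimiser is interior and hence a critical point.
-/

open Filter Set Topology Matrix Real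

lemma exists_hasDerivAt_of_continuousOn {φ : ℝ → ℝ} {s : Set ℝ} (hs : IsOpen s)
    (hs' : s.OrdConnected) (hφ : ContinuousOn φ s) {a : ℝ} (ha : a ∈ s) :
    ∃ G : ℝ → ℝ, ∀ t ∈ s, HasDerivAt G (φ t) t :=
  ⟨fun t => ∫ u in a..t, φ u, fun t ht =>
    intervalIntegral.integral_hasDerivAt_right
      ((hφ.mono (hs'.uIcc_subset ha ht)).intervalIntegrable)
      (hφ.stronglyMeasurableAtFilter hs t ht) (hφ.continuousAt (hs.mem_nhds ht))⟩

lemma sub_le_mul_of_hasDerivAt_of_monotoneOn {G φ : ℝ → ℝ} {s : Set ℝ} (hs : s.OrdConnected)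
    (hG : ∀ t ∈ s, HasDerivAt G (φ t) t) (hφ : MonotoneOn φ s) {a b : ℝ} (ha : a ∈ s)
    (hb : b ∈ s) : G b - G a ≤ (b - a) * φ b := by
  have slope {x y : ℝ} (hx : x ∈ s) (hy : y ∈ s) (hxy : x < y) :
      ∃ c ∈ Set.Ioo x y, φ c * (y - x) = G y - G x := by
    obtain ⟨c, hc, hslope⟩ := exists_hasDerivAt_eq_slope G φ hxy
      (fun t ht => (hG t (hs.out hx hy ht)).continuousAt.continuousWithinAt)
      (fun t ht => hG t (hs.out hx hy (Ioo_subset_Icc_self ht)))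
    exact ⟨c, hc, by rw [hslope, div_mul_cancel₀ _ (sub_ne_zero.2 hxy.ne')]⟩
  rcases lt_trichotomy a b with hab | rfl | hba
  · obtain ⟨c, hc, hGc⟩ := slope ha hb hab
    have : φ c ≤ φ b := hφ (hs.out ha hb (Ioo_subset_Icc_self hc)) hb hc.2.le
    nlinarith
  · simp
  · obtain ⟨c, hc, hGc⟩ := slope hb ha hba
    have : φ b ≤ φ c := hφ hb (hs.out hb ha (Ioo_subset_Icc_self hc)) hc.1.le
    nlinarith

lemma nonneg_of_hasDerivAt_of_isMinOn_Ici {ψ : ℝ → ℝ} {g a : ℝ} (hψ : HasDerivAt ψ g a)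
    (hmin : IsMinOn ψ (Set.Ici a) a) : 0 ≤ g := by
  have hcone : (1 : ℝ) ∈ posTangentConeAt (Set.Ici a) a :=
    mem_posTangentConeAt_of_segment_subset (by simp [segment_eq_Icc, Set.Icc_subset_Ici_self])
  simpa using hmin.localize.hasFDerivWithinAt_nonneg
    (hasDerivAt_iff_hasFDerivAt.1 hψ).hasFDerivWithinAt hcone

lemma add_smul_single_mem_Ici {ι : Type*} [DecidableEq ι] {ε : ℝ} {w : ι → ℝ}
    (hw : w ∈ Set.Ici fun _ => ε) {i : ι} {τ : ℝ} (hτ : ε - w i ≤ τ) :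
    w + τ • Pi.single i 1 ∈ Set.Ici fun _ => ε := by
  intro j
  rcases eq_or_ne j i with rfl | hj
  · simp only [Pi.add_apply, Pi.smul_apply, Pi.single_eq_same, smul_eq_mul, mul_one]
    linarith
  · simpa [hj] using hw j

namespace Matrix

variable {n : Type*} [Fintype n] {M : Matrix n n ℝ}

lemma IsHermitian.dotProduct_mulVec_comm (hM : M.IsHermitian) (v w : n → ℝ) :
    v ⬝ᵥ M *ᵥ w = w ⬝ᵥ M *ᵥ v := by
  rw [dotProduct_mulVec, ← vecMul_transpose, ← conjTranspose_eq_transpose_of_trivial, hM.eq,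
    dotProduct_comm]

lemma IsHermitian.dotProduct_mulVec_add_smul (hM : M.IsHermitian) (w v : n → ℝ) (t : ℝ) :
    (w + t • v) ⬝ᵥ M *ᵥ (w + t • v) =
      w ⬝ᵥ M *ᵥ w + 2 * t * (v ⬝ᵥ M *ᵥ w) + t ^ 2 * (v ⬝ᵥ M *ᵥ v) := by
  simp only [mulVec_add, mulVec_smul, dotProduct_add, add_dotProduct, dotProduct_smul,
    smul_dotProduct, smul_eq_mul, hM.dotProduct_mulVec_comm w v]
  ring

lemma PosDef.exists_pos_mul_sq_norm_le (hM : M.PosDef) :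
    ∃ c > 0, ∀ x : n → ℝ, c * ‖x‖ ^ 2 ≤ x ⬝ᵥ M *ᵥ x := by
  have hQ : Continuous fun x : n → ℝ => x ⬝ᵥ M *ᵥ x :=
    continuous_id.dotProduct (continuous_const.matrix_mulVec continuous_id)
  obtain ⟨c, hc, hcQ⟩ := (isCompact_sphere (0 : n → ℝ) 1).exists_forall_le' hQ.continuousOn
    (a := 0) fun x hx => hM.dotProduct_mulVec_pos (ne_zero_of_mem_unit_sphere ⟨x, hx⟩)
  refine ⟨c, hc, fun x => ?_⟩
  rcases eq_or_ne x 0 with rfl | hx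
  · simp
  have hxn : 0 < ‖x‖ := norm_pos_iff.2 hx
  have hsphere : ‖x‖⁻¹ • x ∈ Metric.sphere (0 : n → ℝ) 1 := by
    simp [norm_smul, hxn.ne']
  have hscaled := hcQ _ hsphere
  simp only [mulVec_smul, dotProduct_smul, smul_dotProduct, smul_eq_mul] at hscaled
  calc c * ‖x‖ ^ 2 ≤ ‖x‖⁻¹ * (‖x‖⁻¹ * (x ⬝ᵥ M *ᵥ x)) * ‖x‖ ^ 2 := by gcongr
    _ = x ⬝ᵥ M *ᵥ x := by field_simp

noncomputable def potential (M : Matrix n n ℝ) (G : n → ℝ → ℝ) (x : n → ℝ) : ℝ :=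
  x ⬝ᵥ M *ᵥ x / 2 + ∑ i, G i (x i)

variable {G φ : n → ℝ → ℝ}

lemma IsHermitian.potential_add_smul_single [DecidableEq n] (hM : M.IsHermitian) (x : n → ℝ)
    (i : n) (t : ℝ) :
    potential M G (x + t • Pi.single i 1) =
      potential M G x + t * (M *ᵥ x) i + t ^ 2 * M i i / 2 + (G i (x i + t) - G i (x i)) := by
  have hsum : ∑ j, G j ((x + t • Pi.single i 1 : n → ℝ) j) =
      ∑ j, G j (x j) + (G i (x i + t) - G i (x i)) := by
    rw [← sub_eq_iff_eq_add', ← Finset.sum_sub_distrib,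
      Finset.sum_eq_single i (fun j _ hj => by simp [hj]) (by simp)]
    simp
  rw [potential, potential, hM.dotProduct_mulVec_add_smul, hsum]
  simp [single_dotProduct]
  ring

lemma IsHermitian.hasDerivAt_potential_add_smul_single [DecidableEq n] (hM : M.IsHermitian)
    {x : n → ℝ} {i : n} (hG : HasDerivAt (G i) (φ i (x i)) (x i)) :
    HasDerivAt (fun t : ℝ => potential M G (x + t • Pi.single i 1))
      ((M *ᵥ x) i + φ i (x i)) 0 := by
  simp only [hM.potential_add_smul_single]
  have hGi : HasDerivAt (fun t => G i (x i + t)) (φ i (x i)) 0 :=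
    HasDerivAt.comp_const_add (x i) 0 (by simpa using hG)
  have hlin : HasDerivAt (fun t : ℝ => t * (M *ᵥ x) i) ((M *ᵥ x) i) 0 := by
    simpa using (hasDerivAt_id (0 : ℝ)).mul_const ((M *ᵥ x) i)
  have hquad : HasDerivAt (fun t : ℝ => t ^ 2 * M i i / 2) 0 0 := by
    simpa using ((hasDerivAt_pow 2 (0 : ℝ)).mul_const (M i i)).div_const 2
  exact (((hlin.const_add _).add hquad).add (hGi.sub_const _)).congr_deriv (by ring)

lemma continuousOn_potential (hG : ∀ i, ContinuousOn (G i) (Set.Ioi 0)) :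
    ContinuousOn (potential M G) {x | ∀ i, 0 < x i} :=
  (continuous_id.dotProduct (continuous_const.matrix_mulVec continuous_id)).continuousOn.div_const 2
    |>.add <| continuousOn_finsetSum _ fun i _ =>
      (hG i).comp (continuous_apply i).continuousOn fun _ hx => hx i

lemma PosDef.exists_lt_potential_of_norm_gt (hM : M.PosDef)
    (hG : ∀ i, ∀ t > 0, HasDerivAt (G i) (φ i t) t) (hφ : ∀ i, MonotoneOn (φ i) (Set.Ioi 0))
    (a : ℝ) : ∃ R, ∀ x : n → ℝ, (∀ i, 0 < x i) → R < ‖x‖ → a < potential M G x := by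
  obtain ⟨c, hc, hcQ⟩ := hM.exists_pos_mul_sq_norm_le
  set C := ∑ i, (|G i 1| + |φ i 1|)
  have hC : 0 ≤ C := by positivity
  have hsum (x : n → ℝ) (hx : ∀ i, 0 < x i) : -(C * (1 + ‖x‖)) ≤ ∑ i, G i (x i) := by
    rw [Finset.sum_mul, ← Finset.sum_neg_distrib]
    refine Finset.sum_le_sum fun i _ => ?_
    have htangent : G i 1 - G i (x i) ≤ (1 - x i) * φ i 1 :=
      sub_le_mul_of_hasDerivAt_of_monotoneOn ordConnected_Ioi (hG i) (hφ i) (hx i)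
        (mem_Ioi.2 one_pos)
    have hxi : |x i| ≤ ‖x‖ := by simpa using norm_le_pi_norm x i
    have hφ1 : -(|φ i 1| * (1 + ‖x‖)) ≤ (x i - 1) * φ i 1 := by
      have h1 : |(x i - 1) * φ i 1| ≤ (1 + ‖x‖) * |φ i 1| := by
        rw [abs_mul]
        gcongr
        linarith [abs_sub (x i) 1, abs_one (α := ℝ)]
      linarith [neg_abs_le ((x i - 1) * φ i 1)]
    nlinarith [neg_abs_le (G i 1), mul_nonneg (abs_nonneg (G i 1)) (norm_nonneg x)]
  refine ⟨max 1 (2 * (2 * C + |a| + 1) / c), fun x hx hxR => ?_⟩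
  have hx1 : 1 < ‖x‖ := (le_max_left _ _).trans_lt hxR
  have hxc : 2 * (2 * C + |a| + 1) < c * ‖x‖ := by
    rw [← div_lt_iff₀' hc]
    exact (le_max_right _ _).trans_lt hxR
  have hquad := mul_lt_mul_of_pos_right hxc (zero_lt_one.trans hx1)
  have hlin : 0 ≤ (C + |a| + 1) * (‖x‖ - 1) := by nlinarith [abs_nonneg a]
  rw [potential]
  nlinarith [hsum x hx, hcQ x, le_abs_self a]

lemma IsHermitian.mulVec_add_nonneg_of_isMinOn_potential (hM : M.IsHermitian)
    (hG : ∀ i, ∀ t > 0, HasDerivAt (G i) (φ i t) t) {ε : ℝ} (hε : 0 < ε) {w : n → ℝ}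
    (hw : w ∈ Set.Ici fun _ => ε) (hmin : IsMinOn (potential M G) (Set.Ici fun _ => ε) w)
    (i : n) : 0 ≤ (M *ᵥ w) i + φ i (w i) := by
  classical
  refine nonneg_of_hasDerivAt_of_isMinOn_Ici
    (hM.hasDerivAt_potential_add_smul_single (hG i _ (hε.trans_le (hw i)))) fun τ hτ => ?_
  simpa using hmin (add_smul_single_mem_Ici hw (i := i) (by linarith [hw i, mem_Ici.1 hτ]))

lemma IsHermitian.mulVec_add_eq_zero_of_isMinOn_potential (hM : M.IsHermitian)
    (hG : ∀ i, ∀ t > 0, HasDerivAt (G i) (φ i t) t) {ε : ℝ} (hε : 0 < ε) {w : n → ℝ}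
    (hw : w ∈ Set.Ici fun _ => ε) (hmin : IsMinOn (potential M G) (Set.Ici fun _ => ε) w)
    {i : n} (hwi : ε < w i) : (M *ᵥ w) i + φ i (w i) = 0 := by
  classical
  refine IsLocalMin.hasDerivAt_eq_zero ?_
    (hM.hasDerivAt_potential_add_smul_single (hG i _ (hε.trans hwi)))
  filter_upwards [Ioi_mem_nhds (sub_neg.2 hwi)] with τ hτ
  simpa using hmin (add_smul_single_mem_Ici hw hτ.le)

theorem PosDef.exists_pos_mulVec_add_eq_zero (hM : M.PosDef)
    (hcont : ∀ i, ContinuousOn (φ i) (Set.Ioi 0)) (hmono : ∀ i, MonotoneOn (φ i) (Set.Ioi 0))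
    (hlim : ∀ i, Tendsto (φ i) (𝓝[>] 0) atBot) :
    ∃ x : n → ℝ, (∀ i, 0 < x i) ∧ ∀ i, (M *ᵥ x) i + φ i (x i) = 0 := by
  choose G hG using fun i =>
    exists_hasDerivAt_of_continuousOn isOpen_Ioi ordConnected_Ioi (hcont i) (mem_Ioi.2 one_pos)
  obtain ⟨R, hR⟩ := hM.exists_lt_potential_of_norm_gt hG hmono (potential M G 1)
  obtain ⟨K, hK⟩ := (isCompact_closedBall (0 : n → ℝ) R).exists_bound_of_continuousOn
    (f := (M *ᵥ ·)) (continuous_const.matrix_mulVec continuous_id).continuousOn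
  -- `K` bounds `M *ᵥ w` on a ball containing the sublevel set of `potential M G 1`, so for such
  -- `w` on the face `w i = ε` the inward derivative `(M *ᵥ w) i + φ i ε` is negative.
  obtain ⟨ε, hεφ, hε, hε1⟩ : ∃ ε, (∀ i, φ i ε < -K) ∧ ε ∈ Set.Ioc 0 1 :=
    ((eventually_all.2 fun i => (hlim i).eventually_lt_atBot (-K)).and
      (Ioc_mem_nhdsGT one_pos)).exists
  have hpos {x : n → ℝ} (hx : x ∈ Set.Ici fun _ => ε) (i : n) : 0 < x i := hε.trans_le (hx i)
  obtain ⟨w, hw, hmin⟩ := ((continuousOn_potential fun i t ht =>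
      (hG i t ht).continuousAt.continuousWithinAt).mono fun x hx => hpos hx).exists_isMinOn'
    isClosed_Ici (x₀ := 1) (fun _ => hε1) <| eventually_inf_principal.2 <|
      (tendsto_norm_cocompact_atTop.eventually_gt_atTop R).mono fun x hxR hx =>
        (hR x (hpos hx) hxR).le
  have hwR : ‖w‖ ≤ R := not_lt.1 fun h => (hmin (fun _ => hε1)).not_gt (hR w (hpos hw) h)
  refine ⟨w, hpos hw, fun i => hM.isHermitian.mulVec_add_eq_zero_of_isMinOn_potential hG hε hw hmin
    ((hw i).lt_of_ne' fun hwi => ?_)⟩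
  have hMw : (M *ᵥ w) i ≤ K := (le_abs_self _).trans <| (norm_le_pi_norm (M *ᵥ w) i).trans <|
    hK w (mem_closedBall_zero_iff.2 hwR)
  have hinward := hM.isHermitian.mulVec_add_nonneg_of_isMinOn_potential hG hε hw hmin i
  rw [hwi] at hinward
  linarith [hεφ i]

lemma PosDef.eq_of_mulVec_add_eq_zero (hM : M.PosDef) {s : Set ℝ}
    (hφ : ∀ i, MonotoneOn (φ i) s) {x y : n → ℝ} (hx : ∀ i, x i ∈ s) (hy : ∀ i, y i ∈ s)
    (hxφ : ∀ i, (M *ᵥ x) i + φ i (x i) = 0) (hyφ : ∀ i, (M *ᵥ y) i + φ i (y i) = 0) :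
    x = y := by
  by_contra hxy
  have hpos := hM.dotProduct_mulVec_pos (sub_ne_zero.2 hxy)
  have hterm (i : n) : (x - y) i * (M *ᵥ (x - y)) i ≤ 0 := by
    rw [mulVec_sub, Pi.sub_apply, Pi.sub_apply, eq_neg_of_add_eq_zero_left (hxφ i),
      eq_neg_of_add_eq_zero_left (hyφ i)]
    rcases le_total (x i) (y i) with h | h
    · nlinarith [hφ i (hx i) (hy i) h]
    · nlinarith [hφ i (hy i) (hx i) h]
  rw [star_trivial] at hpos
  exact hpos.not_ge (Finset.sum_nonpos fun i _ => hterm i)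

theorem PosDef.existsUnique_pos_mulVec_add_eq_zero (hM : M.PosDef)
    (hcont : ∀ i, ContinuousOn (φ i) (Set.Ioi 0)) (hmono : ∀ i, MonotoneOn (φ i) (Set.Ioi 0))
    (hlim : ∀ i, Tendsto (φ i) (𝓝[>] 0) atBot) :
    ∃! x : n → ℝ, (∀ i, 0 < x i) ∧ ∀ i, (M *ᵥ x) i + φ i (x i) = 0 :=
  let ⟨x, hx⟩ := hM.exists_pos_mulVec_add_eq_zero hcont hmono hlim
  ⟨x, hx, fun _ hy => hM.eq_of_mulVec_add_eq_zero hmono hy.1 hx.1 hy.2 hx.2⟩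

end Matrix

lemma one_sub_exp_neg_pos {t : ℝ} (ht : 0 < t) : 0 < 1 - exp (-t) :=
  sub_pos.2 (exp_lt_one_iff.2 (neg_lt_zero.2 ht))

lemma continuousOn_log_one_sub_exp_neg_mul {c : ℝ} (hc : 0 < c) :
    ContinuousOn (fun t => log (1 - exp (-(c * t)))) (Set.Ioi 0) :=
  (Continuous.continuousOn (by fun_prop)).log fun _ ht => (one_sub_exp_neg_pos (mul_pos hc ht)).ne'

lemma monotoneOn_log_one_sub_exp_neg_mul {c : ℝ} (hc : 0 < c) :
    MonotoneOn (fun t => log (1 - exp (-(c * t)))) (Set.Ioi 0) := fun _ hs _ _ hst =>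
  log_le_log (one_sub_exp_neg_pos (mul_pos hc hs)) (by gcongr)

lemma tendsto_log_one_sub_exp_neg_mul_nhdsGT_zero {c : ℝ} (hc : 0 < c) :
    Tendsto (fun t => log (1 - exp (-(c * t)))) (𝓝[>] 0) atBot := by
  refine tendsto_log_nhdsGT_zero.comp (tendsto_nhdsWithin_iff.2 ⟨?_, ?_⟩)
  · have : Continuous fun t => 1 - exp (-(c * t)) := by fun_prop
    simpa using this.continuousAt.tendsto.mono_left (nhdsWithin_le_nhds (a := 0) (s := Ioi 0))
  · exact eventually_mem_nhdsWithin.mono fun t ht => one_sub_exp_neg_pos (mul_pos hc ht)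

lemma one_sub_exp_neg_eq_prod_rpow_iff {ι : Type*} [Fintype ι] {t : ℝ} (ht : 0 < t)
    (a y : ι → ℝ) :
    1 - exp (-t) = ∏ j, exp (-y j) ^ a j ↔ ∑ j, a j * y j + log (1 - exp (-t)) = 0 := by
  have hprod : ∏ j, exp (-y j) ^ a j = exp (-∑ j, a j * y j) := by
    simp_rw [← exp_mul, ← Finset.sum_neg_distrib, exp_sum, neg_mul, mul_comm]
  rw [hprod]
  constructor
  · intro h
    rw [h, log_exp]
    ring
  · intro h
    rw [← eq_neg_of_add_eq_zero_right h, exp_log (one_sub_exp_neg_pos ht)]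

theorem nahm_equation_unique_solution_general (N : ℕ)
    (A : Matrix (Fin N) (Fin N) ℚ) (d : Fin N → ℤ) (hd : ∀ i, 0 < d i)
    (hpd : (Matrix.of fun i j : Fin N => ((A i j : ℝ) * (d j : ℝ))).PosDef) :
    ∃! z : Fin N → ℝ,
      (∀ i, z i ∈ Set.Ioo (0 : ℝ) 1) ∧
      (∀ i, 1 - z i = ∏ j, (z j) ^ ((A i j : ℝ))) := by
  set B : Matrix (Fin N) (Fin N) ℝ := Matrix.of fun i j => (A i j : ℝ) * (d j : ℝ) with hB
  have hd' (i : Fin N) : (0 : ℝ) < d i := by exact_mod_cast hd i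
  have hsolves (w : Fin N → ℝ) (hw : ∀ i, 0 < w i) :
      (∀ i, (B *ᵥ w) i + log (1 - exp (-(d i * w i))) = 0) ↔
        ∀ i, 1 - exp (-(d i * w i)) = ∏ j, exp (-(d j * w j)) ^ (A i j : ℝ) := by
    refine forall_congr' fun i => ?_
    rw [one_sub_exp_neg_eq_prod_rpow_iff (mul_pos (hd' i) (hw i))]
    simp only [hB, mulVec, dotProduct, of_apply, mul_assoc]
  obtain ⟨w, ⟨hw, hwsol⟩, hwuniq⟩ := hpd.existsUnique_pos_mulVec_add_eq_zero
    (fun i => continuousOn_log_one_sub_exp_neg_mul (hd' i))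
    (fun i => monotoneOn_log_one_sub_exp_neg_mul (hd' i))
    (fun i => tendsto_log_one_sub_exp_neg_mul_nhdsGT_zero (hd' i))
  refine ⟨fun i => exp (-(d i * w i)), ⟨fun i => ⟨exp_pos _, ?_⟩, (hsolves w hw).1 hwsol⟩, ?_⟩
  · exact exp_lt_one_iff.2 (neg_lt_zero.2 (mul_pos (hd' i) (hw i)))
  rintro z ⟨hz, hzsol⟩
  set v : Fin N → ℝ := fun i => -log (z i) / d i
  have hv (i : Fin N) : 0 < v i := div_pos (neg_pos.2 (log_neg (hz i).1 (hz i).2)) (hd' i)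
  have hzv (i : Fin N) : exp (-(d i * v i)) = z i := by
    rw [mul_div_cancel₀ _ (hd' i).ne', neg_neg, exp_log (hz i).1]
  have hvw : v = w := hwuniq v ⟨hv, (hsolves v hv).2 (by simpa only [hzv] using hzsol)⟩
  ext i
  rw [← hzv, hvw]

theorem nahm_equation_unique_solution (N : ℕ) (hN : 0 < N)
    (A : Matrix (Fin N) (Fin N) ℚ) (d : Fin N → ℤ) (hd : ∀ i, 0 < d i)
    (hpd : (Matrix.of fun i j : Fin N => ((A i j : ℝ) * (d j : ℝ))).PosDef) :
    ∃! z : Fin N → ℝ,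
      (∀ i, z i ∈ Set.Ioo (0 : ℝ) 1) ∧
      (∀ i, 1 - z i = ∏ j, (z j) ^ ((A i j : ℝ))) :=
  nahm_equation_unique_solution_general N A d hd hpd
end

section
/- Identity of formal power series in x and q: ∑_{n₁,n₂ ≥ 0} q^{(3/2)n₁² + 4n₁n₂ + 4n₂² - (1/2)n₁} x^{n₁+2n₂} / ((q;q)_{n₁}(q²;q²)_{n₂}) = ∑_{n≥0} q^{n²} x^n / (q;q)_n, where (q;q)_n = ∏_{i=1}^n (1-q^i). (Note the exponents (3/2)n₁² - (1/2)n₁ = (3n₁² - n₁)/2 are integers.) -/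
/-! The exponent equals `(n₁ + 2n₂)² + C(n₁, 2)`, so after grouping the left side by
`n = n₁ + 2n₂` the identity becomes, coefficient by coefficient in `t`, Euler's
`e_q(t) = E_q(t) · e_{q²}(t²)`, where `e_q(t) = ∑ tⁿ/(q;q)ₙ = 1/(t;q)_∞` and
`E_q(t) = ∑ q^C(n,2) tⁿ/(q;q)ₙ = (-t;q)_∞`. Both sides of that power-series identity satisfy
`(1 - t) f(t) = f(qt)` and have constant term `1`, and when `q` is not a root of unity this
q-difference equation determines every coefficient. Absolute convergence, from the bound
`|q|^(k² + l²) (|x|/(1 - |q|))^(k + l)` on the regrouped terms, justifies the rearrangement. -/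

open Finset

/-- `(q;q)_n = ∏_{i=1}^n (1 - q^i)`. -/
noncomputable def qFac (q : ℂ) (n : ℕ) : ℂ :=
  ∏ i ∈ Finset.range n, (1 - q ^ (i + 1))

open PowerSeries

lemma qFac_succ (q : ℂ) (n : ℕ) : qFac q (n + 1) = qFac q n * (1 - q ^ (n + 1)) :=
  prod_range_succ _ _

lemma pow_le_norm_qFac {q : ℂ} (hq : ‖q‖ ≤ 1) (n : ℕ) : (1 - ‖q‖) ^ n ≤ ‖qFac q n‖ := by
  rw [qFac, norm_prod]
  calc (1 - ‖q‖) ^ n = ∏ _i ∈ range n, (1 - ‖q‖) := by simp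
    _ ≤ _ := prod_le_prod (fun _ _ => sub_nonneg.2 hq) fun i _ => ?_
  calc 1 - ‖q‖ ≤ 1 - ‖q ^ (i + 1)‖ := by
        rw [norm_pow]; gcongr; exact pow_le_of_le_one (norm_nonneg _) hq (by omega)
    _ ≤ ‖1 - q ^ (i + 1)‖ := by simpa using norm_sub_norm_le 1 (q ^ (i + 1))

section PowerSeries

variable {R : Type*} [Ring R]

lemma coeff_succ_one_sub_X_mul (f : R⟦X⟧) (n : ℕ) :
    coeff (n + 1) ((1 - X) * f) = coeff (n + 1) f - coeff n f := by
  simp [sub_mul, coeff_succ_X_mul]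

lemma coeff_one_sub_X_sq_mul (f : R⟦X⟧) (n : ℕ) :
    coeff n ((1 - X ^ 2) * f) = coeff n f - if 2 ≤ n then coeff (n - 2) f else 0 := by
  simp [sub_mul, coeff_X_pow_mul']

lemma one_add_X_ne_zero [Nontrivial R] : (1 + X : R⟦X⟧) ≠ 0 := fun h => by
  simpa using congrArg constantCoeff h

lemma eq_of_one_sub_X_mul_eq_rescale {K : Type*} [Field K] {q : K} (hq : ∀ n, q ^ (n + 1) ≠ 1)
    {f g : K⟦X⟧} (hf : (1 - X) * f = rescale q f) (hg : (1 - X) * g = rescale q g)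
    (h0 : constantCoeff f = constantCoeff g) : f = g := by
  have coeff_succ : ∀ h : K⟦X⟧, (1 - X) * h = rescale q h →
      ∀ n, coeff (n + 1) h = coeff n h / (1 - q ^ (n + 1)) := by
    intro h hh n
    have := congrArg (coeff (n + 1)) hh
    rw [coeff_succ_one_sub_X_mul, coeff_rescale] at this
    rw [eq_div_iff (sub_ne_zero.2 (hq n).symm)]
    linear_combination this
  ext n
  induction n with
  | zero => simpa using h0
  | succ n ih => rw [coeff_succ f hf, coeff_succ g hg, ih]

end PowerSeries

/-- `e_q(t)` -/
noncomputable def smallQExp (q : ℂ) : ℂ⟦X⟧ := mk fun n => (qFac q n)⁻¹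

/-- `E_q(t)` -/
noncomputable def bigQExp (q : ℂ) : ℂ⟦X⟧ := mk fun n => q ^ n.choose 2 * (qFac q n)⁻¹

/-- `e_{q²}(t²)` -/
noncomputable def evenQExp (q : ℂ) : ℂ⟦X⟧ :=
  mk fun n => if Even n then (qFac (q ^ 2) (n / 2))⁻¹ else 0

lemma coeff_evenQExp_two_mul (q : ℂ) (j : ℕ) :
    coeff (2 * j) (evenQExp q) = (qFac (q ^ 2) j)⁻¹ := by
  simp [evenQExp]

lemma coeff_evenQExp_of_odd (q : ℂ) {n : ℕ} (hn : Odd n) : coeff n (evenQExp q) = 0 := by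
  simp [evenQExp, Nat.not_even_iff_odd.2 hn]

section QDifference

variable {q : ℂ} (hq : ∀ n, q ^ (n + 1) ≠ 1)
include hq

lemma one_sub_X_mul_smallQExp : (1 - X) * smallQExp q = rescale q (smallQExp q) := by
  ext (_ | n)
  · simp [smallQExp]
  · rw [coeff_succ_one_sub_X_mul, coeff_rescale]
    simp only [smallQExp, coeff_mk, qFac_succ, mul_inv]
    linear_combination (qFac q n)⁻¹ * mul_inv_cancel₀ (sub_ne_zero.2 (hq n).symm)

lemma bigQExp_eq_one_add_X_mul_rescale : bigQExp q = (1 + X) * rescale q (bigQExp q) := by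
  ext (_ | n)
  · simp only [add_mul, one_mul, map_add, coeff_zero_X_mul, add_zero, coeff_rescale, pow_zero]
  · have hc : (n + 1).choose 2 = n + n.choose 2 := by
      rw [Nat.choose_succ_succ', Nat.choose_one_right]
    simp only [add_mul, one_mul, map_add, coeff_succ_X_mul, coeff_rescale, bigQExp, coeff_mk,
      qFac_succ, mul_inv, hc, pow_add]
    linear_combination q ^ n * q ^ n.choose 2 * (qFac q n)⁻¹ *
      mul_inv_cancel₀ (sub_ne_zero.2 (hq n).symm)

lemma one_sub_X_sq_mul_evenQExp : (1 - X ^ 2) * evenQExp q = rescale q (evenQExp q) := by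
  ext n
  rw [coeff_one_sub_X_sq_mul, coeff_rescale]
  obtain ⟨j, rfl | rfl⟩ := Nat.even_or_odd' n
  · cases j with
    | zero => simp
    | succ j =>
      have hu : 1 - q ^ (2 * (j + 1)) ≠ 0 := sub_ne_zero.2 (hq (2 * j + 1)).symm
      rw [if_pos (by omega), show 2 * (j + 1) - 2 = 2 * j by omega, coeff_evenQExp_two_mul,
        coeff_evenQExp_two_mul, qFac_succ, mul_inv, ← pow_mul]
      linear_combination (qFac (q ^ 2) j)⁻¹ * mul_inv_cancel₀ hu
  · cases j with
    | zero => simp [coeff_evenQExp_of_odd q odd_one]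
    | succ j =>
      rw [if_pos (by omega), show 2 * (j + 1) + 1 - 2 = 2 * j + 1 by omega,
        coeff_evenQExp_of_odd q (odd_two_mul_add_one _),
        coeff_evenQExp_of_odd q (odd_two_mul_add_one _)]
      ring

theorem bigQExp_mul_evenQExp : bigQExp q * evenQExp q = smallQExp q := by
  refine eq_of_one_sub_X_mul_eq_rescale hq ?_ (one_sub_X_mul_smallQExp hq)
    (by simp [bigQExp, evenQExp, smallQExp, qFac])
  refine mul_left_cancel₀ one_add_X_ne_zero ?_
  calc (1 + X) * ((1 - X) * (bigQExp q * evenQExp q))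
      = bigQExp q * ((1 - X ^ 2) * evenQExp q) := by ring
    _ = (1 + X) * rescale q (bigQExp q) * rescale q (evenQExp q) := by
      rw [one_sub_X_sq_mul_evenQExp hq, ← bigQExp_eq_one_add_X_mul_rescale hq]
    _ = (1 + X) * rescale q (bigQExp q * evenQExp q) := by rw [map_mul, mul_assoc]

end QDifference

lemma pow_succ_ne_one_of_norm_lt_one {𝕜 : Type*} [NormedDivisionRing 𝕜] {q : 𝕜} (hq : ‖q‖ < 1)
    (n : ℕ) : q ^ (n + 1) ≠ 1 := fun h => by
  have := congrArg norm h
  rw [norm_pow, norm_one] at this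
  exact (pow_lt_one₀ (norm_nonneg q) hq n.succ_ne_zero).ne this

section Bounds

variable {q : ℂ} (hq : ‖q‖ < 1)
include hq

lemma norm_coeff_bigQExp_le (n : ℕ) : ‖coeff n (bigQExp q)‖ ≤ ((1 - ‖q‖) ^ n)⁻¹ := by
  have hpos : 0 < (1 - ‖q‖) ^ n := pow_pos (sub_pos.2 hq) n
  rw [bigQExp, coeff_mk, norm_mul, norm_inv, norm_pow]
  calc ‖q‖ ^ n.choose 2 * ‖qFac q n‖⁻¹ ≤ 1 * ((1 - ‖q‖) ^ n)⁻¹ := by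
        gcongr
        · exact pow_le_one₀ (norm_nonneg q) hq.le
        · exact pow_le_norm_qFac hq.le n
    _ = _ := one_mul _

lemma norm_coeff_evenQExp_le (n : ℕ) : ‖coeff n (evenQExp q)‖ ≤ ((1 - ‖q‖) ^ n)⁻¹ := by
  have hpos : 0 < (1 - ‖q‖) ^ n := pow_pos (sub_pos.2 hq) n
  rw [evenQExp, coeff_mk]
  split_ifs
  · rw [norm_inv]
    gcongr
    calc (1 - ‖q‖) ^ n ≤ (1 - ‖q‖) ^ (2 * (n / 2)) :=
          pow_le_pow_of_le_one (by linarith) (by linarith [norm_nonneg q]) (by omega)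
      _ = ((1 - ‖q‖) ^ 2) ^ (n / 2) := pow_mul _ _ _
      _ ≤ (1 - ‖q‖ ^ 2) ^ (n / 2) := by gcongr; nlinarith [norm_nonneg q]
      _ = (1 - ‖q ^ 2‖) ^ (n / 2) := by rw [norm_pow]
      _ ≤ ‖qFac (q ^ 2) (n / 2)‖ :=
          pow_le_norm_qFac (by rw [norm_pow]; nlinarith [norm_nonneg q]) _
  · simp [hpos.le]

end Bounds

lemma summable_pow_sq_mul_pow {r : ℝ} (hr0 : 0 ≤ r) (hr1 : r < 1) (M : ℝ) :
    Summable fun n : ℕ => r ^ (n ^ 2) * M ^ n := by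
  have hlim : Filter.Tendsto (fun n : ℕ => ‖r ^ n * M‖) Filter.atTop (nhds 0) := by
    simpa using ((tendsto_pow_atTop_nhds_zero_of_lt_one hr0 hr1).mul_const M).norm
  refine .of_norm_bounded_eventually_nat summable_geometric_two ?_
  filter_upwards [hlim.eventually_le_const (by norm_num : (0 : ℝ) < 1 / 2)] with n hn
  rw [sq, pow_mul, ← mul_pow, norm_pow]
  gcongr

lemma summable_pow_sq_mul_coeff_mul {q : ℂ} (hq : ‖q‖ < 1) (x : ℂ) :
    Summable fun p : ℕ × ℕ => q ^ ((p.1 + p.2) ^ 2) * x ^ (p.1 + p.2) *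
      (coeff p.1 (bigQExp q) * coeff p.2 (evenQExp q)) := by
  let g : ℕ → ℝ := fun n => ‖q‖ ^ (n ^ 2) * (‖x‖ / (1 - ‖q‖)) ^ n
  have hg : Summable g := summable_pow_sq_mul_pow (norm_nonneg q) hq _
  refine .of_norm_bounded (hg.mul_of_nonneg hg (fun _ => by positivity) fun _ => by positivity) ?_
  rintro ⟨k, l⟩
  calc _ = ‖q‖ ^ ((k + l) ^ 2) * ‖x‖ ^ (k + l) *
          (‖coeff k (bigQExp q)‖ * ‖coeff l (evenQExp q)‖) := by simp
    _ ≤ ‖q‖ ^ (k ^ 2 + l ^ 2) * ‖x‖ ^ (k + l) * (((1 - ‖q‖) ^ k)⁻¹ * ((1 - ‖q‖) ^ l)⁻¹) := by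
        gcongr ?_ * _ * (?_ * ?_)
        · exact pow_le_pow_of_le_one (norm_nonneg q) hq.le (by rw [add_sq]; omega)
        · exact norm_coeff_bigQExp_le hq k
        · exact norm_coeff_evenQExp_le hq l
    _ = g k * g l := by simp only [g]; ring

lemma Summable.tsum_eq_tsum_sum_antidiagonal {A α : Type*} [AddCommMonoid A] [HasAntidiagonal A]
    [AddCommMonoid α] [TopologicalSpace α] [ContinuousAdd α] [T3Space α] {f : A × A → α}
    (hf : Summable f) : ∑' p, f p = ∑' n, ∑ p ∈ antidiagonal n, f p := by
  conv_rhs => congr; ext; rw [← sum_finset_coe, ← tsum_fintype (L := .unconditional _)]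
  rw [← HasAntidiagonal.sigmaAntidiagonalEquivProd.tsum_eq f]
  exact (HasAntidiagonal.sigmaAntidiagonalEquivProd.summable_iff.mpr hf).tsum_sigma'
    fun _ ↦ (hasSum_fintype _).summable

lemma tsum_two_mul_snd_eq_tsum {α : Type*} [AddCommMonoid α] [TopologicalSpace α]
    {f : ℕ × ℕ → α} (hf : ∀ k j, f (k, 2 * j + 1) = 0) :
    ∑' p : ℕ × ℕ, f (p.1, 2 * p.2) = ∑' p, f p := by
  refine Function.Injective.tsum_eq (g := fun p : ℕ × ℕ => (p.1, 2 * p.2)) ?_ ?_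
  · rintro ⟨k, j⟩ ⟨k', j'⟩ h
    simp only [Prod.mk.injEq] at h ⊢
    omega
  · rintro ⟨k, l⟩ hkl
    obtain ⟨j, rfl | rfl⟩ := Nat.even_or_odd' l
    · exact ⟨(k, j), rfl⟩
    · exact absurd (hf k j) hkl

lemma sum_antidiagonal_mul_coeff_mul {R : Type*} [CommSemiring R] (w : ℕ → R) (f g : R⟦X⟧)
    (n : ℕ) : ∑ p ∈ antidiagonal n, w (p.1 + p.2) * (coeff p.1 f * coeff p.2 g) =
      w n * coeff n (f * g) := by
  rw [coeff_mul, mul_sum]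
  exact sum_congr rfl fun p hp => by rw [mem_antidiagonal.1 hp]

lemma exponent_eq_sq_add_choose_two (k j : ℕ) :
    (3 * k ^ 2 - k) / 2 + 4 * k * j + 4 * j ^ 2 = (k + 2 * j) ^ 2 + k.choose 2 := by
  have h : 2 * k.choose 2 + k = k ^ 2 := by
    rw [Nat.choose_two_right, Nat.mul_div_cancel' (Nat.even_mul_pred_self k).two_dvd]
    cases k <;> simp [sq, Nat.mul_succ]
  have : (3 * k ^ 2 - k) / 2 = k ^ 2 + k.choose 2 := by omega
  rw [this]
  ring

theorem double_sum_RR_x (q x : ℂ) (hq : ‖q‖ < 1) :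
    ∑' n : ℕ × ℕ,
        q ^ ((3 * n.1 ^ 2 - n.1) / 2 + 4 * n.1 * n.2 + 4 * n.2 ^ 2) * x ^ (n.1 + 2 * n.2) /
          (qFac q n.1 * qFac (q ^ 2) n.2) =
      ∑' n : ℕ, q ^ (n ^ 2) * x ^ n / qFac q n := by
  let w : ℕ → ℂ := fun n => q ^ (n ^ 2) * x ^ n
  let G : ℕ × ℕ → ℂ := fun p => w (p.1 + p.2) * (coeff p.1 (bigQExp q) * coeff p.2 (evenQExp q))
  have hG_odd : ∀ k j, G (k, 2 * j + 1) = 0 := fun k j => by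
    simp [G, coeff_evenQExp_of_odd q (odd_two_mul_add_one j)]
  calc _ = ∑' p : ℕ × ℕ, G (p.1, 2 * p.2) := tsum_congr fun p => by
          simp only [G, w, exponent_eq_sq_add_choose_two, coeff_evenQExp_two_mul, bigQExp,
            coeff_mk]
          ring
    _ = ∑' n, ∑ p ∈ antidiagonal n, G p := by
          rw [tsum_two_mul_snd_eq_tsum hG_odd]
          exact (summable_pow_sq_mul_coeff_mul hq x).tsum_eq_tsum_sum_antidiagonal
    _ = ∑' n, w n * coeff n (smallQExp q) := by
          simp_rw [G, sum_antidiagonal_mul_coeff_mul,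
            bigQExp_mul_evenQExp (pow_succ_ne_one_of_norm_lt_one hq)]
    _ = _ := by simp [w, smallQExp, div_eq_mul_inv]
end

section
/- Let F be a field, and Z(F) the free abelian group on ℙ¹(F) = F ∪ {∞}. Define d: Z(F) → ∧²F^× by [X] ↦ X ∧ (1−X) for X ≠ 0, 1, ∞ and [0], [1], [∞] ↦ 0. Then every five-term element [X] − [Y] + [Y/X] − [(1−X^{-1})/(1−Y^{-1})] + [(1−X)/(1−Y)] (for X, Y ∈ F with X, Y, X/Y, (1−X)/(1−Y), (1−X^{-1})/(1−Y^{-1}) all defined and ∉ {0,1}) lies in the kernel A(F) of d. -/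
/-- The image `X ∧ (1 - X)` of `[X]` under `d : Z(F) → ∧² F^×`, for `X ∉ {0, 1}`,
    in the exterior algebra over ℤ of the multiplicative group `Fˣ` (written additively). -/
noncomputable def dWedge {F : Type*} [Field F] (X : F) (hX0 : X ≠ 0) (hX1 : X ≠ 1) :
    ExteriorAlgebra ℤ (Additive Fˣ) :=
  ExteriorAlgebra.ι ℤ (Additive.ofMul (Units.mk0 X hX0)) *
    ExteriorAlgebra.ι ℤ (Additive.ofMul (Units.mk0 (1 - X) (sub_ne_zero.mpr hX1.symm)))

/-! Each of the five arguments `v` and its complement `1 - v` is a ratio of products of the units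
`X, 1 - X, Y, 1 - Y, X - Y`; e.g. `1 - (1 - X⁻¹) / (1 - Y⁻¹) = (X - Y) / (X (1 - Y))`. Writing their
images in `Additive Fˣ` as `a, b, c, d, e`, the five wedges expand bilinearly and everything cancels
except the anticommutators `a ∧ b + b ∧ a` and `a ∧ d + d ∧ a`, which vanish. -/

open ExteriorAlgebra

theorem ExteriorAlgebra.ι_mul_ι_five_term {R M : Type*} [CommRing R] [AddCommGroup M]
    [Module R M] (a b c d e : M) :
    ι R a * ι R b - ι R c * ι R d + ι R (c - a) * ι R (e - a) -
      ι R (b + c - (a + d)) * ι R (e - (a + d)) + ι R (b - d) * ι R (e - d) = 0 := by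
  simp only [map_add, map_sub]
  calc _ = (ι R a * ι R b + ι R b * ι R a) - (ι R a * ι R d + ι R d * ι R a) := by noncomm_ring
    _ = 0 := by rw [ι_add_mul_swap, ι_add_mul_swap, sub_zero]

theorem dWedge_eq_ι_mul_ι {F : Type*} [Field F] {X : F} (hX0 : X ≠ 0) (hX1 : X ≠ 1) (u v : Fˣ)
    (hu : (u : F) = X) (hv : (v : F) = 1 - X) :
    dWedge X hX0 hX1 = ι ℤ (Additive.ofMul u) * ι ℤ (Additive.ofMul v) := by
  rw [dWedge, show Units.mk0 X hX0 = u from Units.ext hu.symm,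
    show Units.mk0 (1 - X) _ = v from Units.ext hv.symm]

theorem five_term_in_kernel {F : Type*} [Field F] (X Y : F)
    (hX0 : X ≠ 0) (hX1 : X ≠ 1) (hY0 : Y ≠ 0) (hY1 : Y ≠ 1)
    (h10 : Y / X ≠ 0) (h11 : Y / X ≠ 1)
    (h20 : (1 - X⁻¹) / (1 - Y⁻¹) ≠ 0) (h21 : (1 - X⁻¹) / (1 - Y⁻¹) ≠ 1)
    (h30 : (1 - X) / (1 - Y) ≠ 0) (h31 : (1 - X) / (1 - Y) ≠ 1) :
    dWedge X hX0 hX1 - dWedge Y hY0 hY1 + dWedge (Y / X) h10 h11 -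
      dWedge ((1 - X⁻¹) / (1 - Y⁻¹)) h20 h21 +
      dWedge ((1 - X) / (1 - Y)) h30 h31 = 0 := by
  have hXY : X - Y ≠ 0 := fun h ↦ h11 (by rw [sub_eq_zero.mp h, div_self hY0])
  have hX1' : 1 - X ≠ 0 := sub_ne_zero.mpr hX1.symm
  have hY1' : 1 - Y ≠ 0 := sub_ne_zero.mpr hY1.symm
  set x := Units.mk0 X hX0
  set y := Units.mk0 Y hY0
  set x' := Units.mk0 (1 - X) hX1'
  set y' := Units.mk0 (1 - Y) hY1'
  set z := Units.mk0 (X - Y) hXY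
  rw [dWedge_eq_ι_mul_ι hX0 hX1 x x' rfl rfl, dWedge_eq_ι_mul_ι hY0 hY1 y y' rfl rfl,
    dWedge_eq_ι_mul_ι h10 h11 (y / x) (z / x) (by simp [x, y]) (by simp [x, z]; field_simp),
    dWedge_eq_ι_mul_ι h20 h21 (x' * y / (x * y')) (z / (x * y'))
      (by simp [x, y, x', y']; field_simp; ring) (by simp [x, z, y']; field_simp; ring),
    dWedge_eq_ι_mul_ι h30 h31 (x' / y') (z / y') (by simp [x', y'])
      (by simp [y', z]; field_simp; ring)]
  simp only [ofMul_div, ofMul_mul]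
  exact ι_mul_ι_five_term _ _ _ _ _
end
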